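/- arXiv:2312.17153 — 5 statements merged into one kernel-verified Lean document; each statement's English description precedes it below -/
import Mathlib

section
/- For m ≥ 1 and n ≥ 1, the row sum of the m-th order Eulerian triangle equals the product Σ_{k=0}^{n-1} T^(m)_{n,k} = ∏_{j=0}^{n-1} (jm + 1) = 1·(m+1)·(2m+1)···((n-1)m+1). -/
/-- The `m`th-order Eulerian numbers `T^(m)_{n,k}`, with integer descent index `k`
(so `T^(m)_{n,k} = 0` for `k < 0` or `k ≥ n`). -/
def eulerianT (m : ℕ) : ℕ → ℤ → ℤ
  | 0, _ => 0
  | 1, k => if k = 0 then 1 else 0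
  | n + 2, k =>
      if k < 0 ∨ (n : ℤ) + 2 ≤ k then 0
      else (k + 1) * eulerianT m (n + 1) k +
        ((m : ℤ) * ((n : ℤ) + 2) - k - (m : ℤ) + 1) * eulerianT m (n + 1) (k - 1)

/-! Each row sum is the previous one times `m n + 1`: summing the recurrence over `k` and
shifting the second sum by one, the weights `k + 1` and `m n - k` of `T^(m)_{n,k}` add up to
`m n + 1`. -/

section

variable (m : ℕ)

lemma eulerianT_of_neg (n : ℕ) {k : ℤ} (hk : k < 0) : eulerianT m n k = 0 := by
  match n with
  | 0 => rfl
  | 1 => simp [eulerianT]; omega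
  | n + 2 => rw [eulerianT, if_pos (Or.inl hk)]

lemma eulerianT_of_le (n : ℕ) {k : ℤ} (hk : (n : ℤ) ≤ k) : eulerianT m n k = 0 := by
  match n with
  | 0 => rfl
  | 1 => simp [eulerianT]; omega
  | n + 2 => rw [eulerianT, if_pos (Or.inr (by push_cast at hk; omega))]

/-- The defining recurrence, which holds for every `k` since both sides vanish outside
`0 ≤ k < n + 2`. -/
lemma eulerianT_add_two (n : ℕ) (k : ℤ) :
    eulerianT m (n + 2) k =
      (k + 1) * eulerianT m (n + 1) k +
        ((m : ℤ) * ((n : ℤ) + 2) - k - (m : ℤ) + 1) * eulerianT m (n + 1) (k - 1) := by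
  rw [eulerianT]
  split_ifs with hk
  · rcases hk with hk | hk
    · rw [eulerianT_of_neg m _ hk, eulerianT_of_neg m _ (by omega : k - 1 < 0)]; ring
    · rw [eulerianT_of_le m _ (by push_cast; omega : ((n + 1 : ℕ) : ℤ) ≤ k),
        eulerianT_of_le m _ (by push_cast; omega : ((n + 1 : ℕ) : ℤ) ≤ k - 1)]; ring
  · rfl

lemma sum_range_eulerianT_add_two (n : ℕ) :
    ∑ k ∈ Finset.range (n + 2), eulerianT m (n + 2) k =
      ((m : ℤ) * ((n : ℤ) + 1) + 1) * ∑ k ∈ Finset.range (n + 1), eulerianT m (n + 1) k := by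
  have hlast : eulerianT m (n + 1) (n + 1 : ℕ) = 0 := eulerianT_of_le m _ le_rfl
  have hfirst : eulerianT m (n + 1) ((0 : ℕ) - 1) = 0 := eulerianT_of_neg m _ (by norm_num)
  calc ∑ k ∈ Finset.range (n + 2), eulerianT m (n + 2) k
      = ∑ k ∈ Finset.range (n + 2), ((k : ℤ) + 1) * eulerianT m (n + 1) k +
          ∑ k ∈ Finset.range (n + 2),
            ((m : ℤ) * ((n : ℤ) + 2) - k - m + 1) * eulerianT m (n + 1) ((k : ℤ) - 1) := by
        simp only [eulerianT_add_two, Finset.sum_add_distrib]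
    _ = ∑ k ∈ Finset.range (n + 1), ((k : ℤ) + 1) * eulerianT m (n + 1) k +
          ∑ k ∈ Finset.range (n + 1), ((m : ℤ) * ((n : ℤ) + 1) - k) * eulerianT m (n + 1) k := by
        rw [Finset.sum_range_succ _ (n + 1), Finset.sum_range_succ' _ (n + 1), hlast, hfirst]
        push_cast
        ring_nf
    _ = _ := by
        rw [← Finset.sum_add_distrib, Finset.mul_sum]
        exact Finset.sum_congr rfl fun k _ => by ring

end

theorem rowSum_eq_prod_general (m n : ℕ) (hn : 1 ≤ n) :
    ∑ k ∈ Finset.range n, eulerianT m n (k : ℤ) =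
      ∏ j ∈ Finset.range n, ((j : ℤ) * (m : ℤ) + 1) := by
  induction n, hn using Nat.le_induction with
  | base => simp [eulerianT]
  | succ n hn ih =>
    obtain ⟨n, rfl⟩ := Nat.exists_eq_add_of_le' hn
    rw [sum_range_eulerianT_add_two, Finset.prod_range_succ, ih]
    push_cast
    ring

theorem rowSum_eq_prod (m n : ℕ) (hm : 1 ≤ m) (hn : 1 ≤ n) :
    ∑ k ∈ Finset.range n, eulerianT m n (k : ℤ) =
      ∏ j ∈ Finset.range n, ((j : ℤ) * (m : ℤ) + 1) :=
  rowSum_eq_prod_general m n hn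
end

section
/- For m ≥ 1 and n ≥ 1, the m-th order Eulerian fraction F_{m;n}(t) = S_{m;n}(t)/(1-t)^{m(n-1)+2} satisfies d/dt [ t/(1-t)^{m-1} · F_{m;n}(t) ] = F_{m;n+1}(t) for t ≠ 1. -/
/-- The `m`th-order Eulerian polynomial `S_{m;n}(t)`. -/
noncomputable def S (m n : ℕ) (t : ℝ) : ℝ :=
  ∑ k ∈ Finset.range n, (eulerianT m n (k : ℤ) : ℝ) * t ^ k

/-- The `m`th-order Eulerian fraction. -/
noncomputable def F (m n : ℕ) (t : ℝ) : ℝ := S m n t / (1 - t) ^ (m * (n - 1) + 2)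


/-!
Writing `F_{m;n}(t) = S_{m;n}(t)/(1-t)^{m(n-1)+2}`, the function to differentiate is
`t S_{m;n}(t) / (1-t)^{mn+1}`, whose derivative by the quotient rule is
`((1 + mnt) S_{m;n}(t) + t(1-t) S'_{m;n}(t)) / (1-t)^{mn+2}`. The numerator is `S_{m;n+1}(t)`:
this is the recurrence of the Eulerian numbers read off coefficientwise.
-/

open Finset

lemma eulerianT_eq_zero (m n : ℕ) (k : ℤ) (h : k < 0 ∨ (n : ℤ) ≤ k) :
    eulerianT m n k = 0 := by
  match n with
  | 0 => rfl
  | 1 => simp [eulerianT, show k ≠ 0 by omega]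
  | n + 2 =>
    rw [eulerianT, if_pos]
    push_cast at h
    exact h

lemma eulerianT_succ (m n : ℕ) (hn : 1 ≤ n) (k : ℕ) :
    eulerianT m (n + 1) k =
      (k + 1) * eulerianT m n k + (m * n - k + 1) * eulerianT m n (k - 1) := by
  obtain ⟨n, rfl⟩ : ∃ n', n = n' + 1 := ⟨n - 1, by omega⟩
  rw [eulerianT]
  by_cases hk : (n : ℤ) + 2 ≤ k
  · rw [if_pos (Or.inr hk), eulerianT_eq_zero m _ _ (by push_cast; omega),
      eulerianT_eq_zero m _ _ (by push_cast; omega)]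
    ring
  · rw [if_neg (by omega)]
    push_cast
    ring

lemma hasDerivAt_S (m n : ℕ) (t : ℝ) :
    HasDerivAt (S m n) (∑ k ∈ range n, (eulerianT m n k : ℝ) * (k * t ^ (k - 1))) t :=
  HasDerivAt.fun_sum fun k _ => (hasDerivAt_pow k t).const_mul _

lemma mul_deriv_S (m n : ℕ) (t : ℝ) :
    t * deriv (S m n) t = ∑ k ∈ range n, (eulerianT m n k : ℝ) * k * t ^ k := by
  rw [(hasDerivAt_S m n t).deriv, mul_sum]
  refine sum_congr rfl fun k _ => ?_
  cases k with
  | zero => simp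
  | succ k => rw [Nat.add_sub_cancel, pow_succ]; ring

lemma S_succ (m n : ℕ) (hn : 1 ≤ n) (t : ℝ) :
    S m (n + 1) t = (1 + m * n * t) * S m n t + t * (1 - t) * deriv (S m n) t := by
  have hT (k : ℕ) := eulerianT_succ m n hn k
  have h_top : eulerianT m n n = 0 := eulerianT_eq_zero m n n (Or.inr le_rfl)
  have h_bot : eulerianT m n (-1) = 0 := eulerianT_eq_zero m n (-1) (Or.inl (by omega))
  have h_shift : ∑ k ∈ range (n + 1), ((m : ℝ) * n - k + 1) * (eulerianT m n (k - 1) : ℝ) * t ^ k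
      = ∑ k ∈ range n, ((m : ℝ) * n - k) * (eulerianT m n k : ℝ) * t ^ (k + 1) := by
    rw [sum_range_succ']
    simp only [Nat.cast_succ, add_sub_cancel_right, Nat.cast_zero, zero_sub, h_bot, Int.cast_zero,
      mul_zero, zero_mul, add_zero]
    refine sum_congr rfl fun k _ => by ring
  calc S m (n + 1) t
      = ∑ k ∈ range (n + 1), ((k + 1) * (eulerianT m n k : ℝ) * t ^ k
          + ((m : ℝ) * n - k + 1) * (eulerianT m n (k - 1) : ℝ) * t ^ k) := by
        refine sum_congr rfl fun k _ => ?_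
        rw [hT k]
        push_cast
        ring
    _ = ∑ k ∈ range n, ((k + 1) * (eulerianT m n k : ℝ) * t ^ k
          + ((m : ℝ) * n - k) * (eulerianT m n k : ℝ) * t ^ (k + 1)) := by
        rw [sum_add_distrib, sum_range_succ, h_top, h_shift, Int.cast_zero, mul_zero, zero_mul,
          add_zero, ← sum_add_distrib]
    _ = (1 + m * n * t) * S m n t + (1 - t) * (t * deriv (S m n) t) := by
        rw [mul_deriv_S, S, mul_sum, mul_sum, ← sum_add_distrib]
        refine sum_congr rfl fun k _ => by ring
    _ = _ := by ring

lemma hasDerivAt_mul_div_one_sub_pow {P : ℝ → ℝ} {P' t : ℝ} (hP : HasDerivAt P P' t)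
    (a : ℕ) (ht : t ≠ 1) :
    HasDerivAt (fun s => s * P s / (1 - s) ^ (a + 1))
      (((1 + a * t) * P t + t * (1 - t) * P') / (1 - t) ^ (a + 2)) t := by
  have h1t : 1 - t ≠ 0 := sub_ne_zero.mpr ht.symm
  have hden : HasDerivAt (fun s : ℝ => (1 - s) ^ (a + 1)) ((a + 1 : ℕ) * (1 - t) ^ a * -1) t :=
    ((hasDerivAt_id t).const_sub 1).pow (a + 1)
  have hnum : HasDerivAt (fun s => s * P s) (1 * P t + t * P') t := (hasDerivAt_id' t).mul hP
  refine (hnum.fun_div hden (pow_ne_zero _ h1t)).congr_deriv ?_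
  rw [div_eq_div_iff (pow_ne_zero _ (pow_ne_zero _ h1t)) (pow_ne_zero _ h1t)]
  push_cast
  ring

theorem deriv_F (m n : ℕ) (hm : 1 ≤ m) (hn : 1 ≤ n) (t : ℝ) (ht : t ≠ 1) :
    deriv (fun s : ℝ => s / (1 - s) ^ (m - 1) * F m n s) t = F m (n + 1) t := by
  have h_exp : m - 1 + (m * (n - 1) + 2) = m * n + 1 := by
    obtain ⟨n, rfl⟩ : ∃ n', n = n' + 1 := ⟨n - 1, by omega⟩
    rw [Nat.add_sub_cancel, mul_add]
    omega
  have h_fun : (fun s : ℝ => s / (1 - s) ^ (m - 1) * F m n s)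
      = fun s => s * S m n s / (1 - s) ^ (m * n + 1) := by
    funext s
    rw [F, div_mul_div_comm, ← pow_add, h_exp]
  have hS : HasDerivAt (S m n) (deriv (S m n) t) t :=
    (hasDerivAt_S m n t).differentiableAt.hasDerivAt
  rw [h_fun, (hasDerivAt_mul_div_one_sub_pow hS (m * n) ht).deriv, F, S_succ m n hn,
    Nat.add_sub_cancel, Nat.cast_mul]
end

section
/- For m ≥ 1, n ≥ 1 and 0 ≤ k ≤ n-1, the inversion formula T^(m)_{n,k} = Σ_{ℓ=1}^{k+1} (-1)^{k-ℓ+1} · C(mn+1, k-ℓ+1) · f_{m;n}(ℓ) holds, where f_{m;n}(ℓ) is the ℓ-th power series coefficient of F̂_{m;n}(t) = t·S_{m;n}(t)/(1-t)^{mn+1}. -/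
/-! Compare the coefficients of `t^(k+1)` in `t·S_{m;n}(t) = (1-t)^(mn+1)·F(t)`, using
`[t^i] (1-t)^N = (-1)^i C(N,i)`; the term `ℓ = 0` drops out since the constant terms give `f 0 = 0`. -/

namespace PowerSeries

variable {R : Type*} [CommRing R]

theorem coeff_one_sub_X_pow (N i : ℕ) :
    coeff i ((1 - X : R⟦X⟧) ^ N) = (-1) ^ i * N.choose i := by
  have h : (1 - X : R⟦X⟧) ^ N = rescale (-1) ((1 + Polynomial.X) ^ N : Polynomial R) := by
    simp [sub_eq_add_neg]
  rw [h, coeff_rescale, Polynomial.coeff_coe, Polynomial.coeff_one_add_X_pow]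

theorem coeff_one_sub_X_pow_mul_mk (N j : ℕ) (f : ℕ → R) :
    coeff j ((1 - X : R⟦X⟧) ^ N * mk f) =
      ∑ ℓ ∈ Finset.range (j + 1), (-1) ^ (j - ℓ) * N.choose (j - ℓ) * f ℓ := by
  rw [mul_comm, coeff_mul, Finset.Nat.sum_antidiagonal_eq_sum_range_succ
    (fun a b => coeff a (mk f) * coeff b ((1 - X : R⟦X⟧) ^ N))]
  simp only [coeff_mk, coeff_one_sub_X_pow]
  exact Finset.sum_congr rfl fun _ _ => by ring

theorem sum_range_C_mul_X_pow_succ (n : ℕ) (a : ℕ → R) (ha : ∀ k, n ≤ k → a k = 0) :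
    ∑ k ∈ Finset.range n, C (a k) * X ^ (k + 1) = X * mk a := by
  ext (_ | j)
  · simp
  · simpa [coeff_succ_X_mul, map_sum] using fun h => (ha j h).symm

end PowerSeries

theorem eulerianT_eq_zero_of_le (m n : ℕ) (k : ℤ) (hk : n ≤ k) : eulerianT m n k = 0 := by
  match n with
  | 0 => rfl
  | 1 => rw [eulerianT, if_neg (by omega)]
  | n + 2 => rw [eulerianT, if_pos (by omega)]

open PowerSeries in
theorem eulerianT_inversion_general (m n : ℕ) (f : ℕ → ℤ)
    (hf : (∑ k ∈ Finset.range n, PowerSeries.C (R := ℤ) (eulerianT m n (k : ℤ)) *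
        PowerSeries.X ^ (k + 1)) =
      (1 - PowerSeries.X) ^ (m * n + 1) * PowerSeries.mk f)
    (k : ℕ) :
    eulerianT m n (k : ℤ) =
      ∑ ℓ ∈ Finset.Icc 1 (k + 1),
        (-1 : ℤ) ^ (k + 1 - ℓ) * ((m * n + 1).choose (k + 1 - ℓ) : ℤ) * f ℓ := by
  rw [sum_range_C_mul_X_pow_succ n _
    fun k hk => eulerianT_eq_zero_of_le m n k (by exact_mod_cast hk)] at hf
  have hf0 : f 0 = 0 := by
    simpa [coeff_one_sub_X_pow_mul_mk] using congrArg (coeff 0) hf.symm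
  have hcoeff := congrArg (coeff (k + 1)) hf
  rw [coeff_succ_X_mul, coeff_mk, coeff_one_sub_X_pow_mul_mk, Finset.range_eq_Ico,
    Finset.sum_eq_sum_Ico_succ_bot k.succ.succ_pos, hf0, mul_zero, zero_add] at hcoeff
  exact hcoeff

theorem eulerianT_inversion (m n : ℕ) (hm : 1 ≤ m) (hn : 1 ≤ n) (f : ℕ → ℤ)
    (hf : (∑ k ∈ Finset.range n, PowerSeries.C (R := ℤ) (eulerianT m n (k : ℤ)) *
        PowerSeries.X ^ (k + 1)) =
      (1 - PowerSeries.X) ^ (m * n + 1) * PowerSeries.mk f)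
    (k : ℕ) (hk : k ≤ n - 1) :
    eulerianT m n (k : ℤ) =
      ∑ ℓ ∈ Finset.Icc 1 (k + 1),
        (-1 : ℤ) ^ (k + 1 - ℓ) * ((m * n + 1).choose (k + 1 - ℓ) : ℤ) * f ℓ :=
  eulerianT_inversion_general m n f hf k
end

section
/- For k ≥ 1 and n ≥ 0, the unsigned Stirling number of the first kind satisfies [n choose n-k] (Stirling cycle number c(n, n-k)) = Σ_{i=k+1}^{n} T^(2)_{k, 2k-i} · C(2k + n - i, 2k). -/
/-- Unsigned Stirling numbers of the first kind `c(n,j)` (Stirling cycle numbers),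
with integer index `j` (so `c(n,j) = 0` for `j < 0`). -/
def stirlingFirst : ℕ → ℤ → ℕ
  | 0, j => if j = 0 then 1 else 0
  | n + 1, j => n * stirlingFirst n j + stirlingFirst n (j - 1)

/-!
The identity is the Gessel–Stanley formula `c(n, n - k) = ∑_{j < k} T^(2)_{k,j} C(n + j, 2k)`
(Concrete Mathematics, (6.44)) reindexed by `i = 2k - j`. The formula is proved by induction on `n`:
the right side obeys the recurrence `c(n + 1, n + 1 - k) = n c(n, n - (k - 1)) + c(n, n - k)` of the
left side, because Pascal's rule splits off `∑_j T^(2)_{k,j} C(n + j, 2k - 1)`, and the Eulerian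
recurrence turns this sum into `n` times the right side for `k - 1` through
`(j + 1) C(b, r + 1) + (r - j) C(b + 1, r + 1) = (b - j) C(b, r)`.
-/

open Finset

namespace eulerianT

theorem eq_zero_of_neg (m : ℕ) : ∀ (n : ℕ) {k : ℤ}, k < 0 → eulerianT m n k = 0
  | 0, _, _ => rfl
  | 1, k, hk => by simp [eulerianT, hk.ne]
  | n + 2, k, hk => by rw [eulerianT, if_pos (Or.inl hk)]

theorem eq_zero_of_le (m : ℕ) : ∀ (n : ℕ) {k : ℤ}, (n : ℤ) ≤ k → eulerianT m n k = 0
  | 0, _, _ => rfl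
  | 1, k, hk => by simp [eulerianT, show k ≠ 0 by omega]
  | n + 2, k, hk => by rw [eulerianT, if_pos (Or.inr (by push_cast at hk; exact hk))]

theorem succ (m : ℕ) {n : ℕ} (hn : 1 ≤ n) (k : ℤ) :
    eulerianT m (n + 1) k =
      (k + 1) * eulerianT m n k + (m * (n + 1) - k - m + 1) * eulerianT m n (k - 1) := by
  obtain ⟨n, rfl⟩ : ∃ p, n = p + 1 := ⟨n - 1, by omega⟩
  rw [eulerianT]
  split_ifs with hk
  · rcases hk with hk | hk
    · rw [eq_zero_of_neg m _ hk, eq_zero_of_neg m _ (by omega : k - 1 < 0)]; ring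
    · rw [eq_zero_of_le m _ (by push_cast; omega), eq_zero_of_le m _ (by push_cast; omega)]
      ring
  · push_cast; ring

end eulerianT

theorem stirlingFirst_eq_zero_of_lt :
    ∀ (n : ℕ) {j : ℤ}, (n : ℤ) < j → stirlingFirst n j = 0
  | 0, j, hj => by rw [stirlingFirst, if_neg (by omega)]
  | n + 1, j, hj => by
      rw [stirlingFirst, stirlingFirst_eq_zero_of_lt n (by omega),
        stirlingFirst_eq_zero_of_lt n (by omega), mul_zero]

theorem stirlingFirst_self : ∀ n : ℕ, stirlingFirst n n = 1
  | 0 => rfl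
  | n + 1 => by
      rw [stirlingFirst, stirlingFirst_eq_zero_of_lt n (by omega), Nat.cast_succ,
        add_sub_cancel_right, stirlingFirst_self n, mul_zero, zero_add]

theorem stirlingFirst_self_sub_one : ∀ n : ℕ, stirlingFirst n (n - 1) = n.choose 2
  | 0 => rfl
  | n + 1 => by
      rw [stirlingFirst, Nat.cast_succ, add_sub_cancel_right, stirlingFirst_self,
        stirlingFirst_self_sub_one n, Nat.choose_succ_succ, Nat.choose_one_right, mul_one]

theorem Int.succ_mul_choose_succ (a r : ℕ) :
    ((r : ℤ) + 1) * a.choose (r + 1) = ((a : ℤ) - r) * a.choose r := by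
  rcases le_or_gt r a with h | h
  · have := Nat.choose_succ_right_eq a r
    zify [h] at this
    linear_combination this
  · simp [Nat.choose_eq_zero_of_lt h, Nat.choose_eq_zero_of_lt (Nat.lt_succ_of_lt h)]

theorem Int.add_one_mul_choose_add_sub_mul_choose_succ (b r j : ℕ) :
    ((j : ℤ) + 1) * b.choose (r + 1) + ((r : ℤ) - j) * (b + 1).choose (r + 1) =
      ((b : ℤ) - j) * b.choose r := by
  rw [Nat.choose_succ_succ']
  push_cast
  linear_combination Int.succ_mul_choose_succ b r

def eulerianChooseSum (n k : ℕ) : ℤ :=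
  ∑ j ∈ range k, eulerianT 2 k j * (n + j).choose (2 * k)

theorem sum_eulerianT2_succ_mul_choose {k : ℕ} (hk : 1 ≤ k) (a : ℕ) :
    ∑ j ∈ range (k + 1), eulerianT 2 (k + 1) j * (a + j).choose (2 * k + 1) =
      a * eulerianChooseSum a k := by
  have hrec (j : ℕ) : eulerianT 2 (k + 1) j =
      (j + 1) * eulerianT 2 k j + (2 * k + 1 - j) * eulerianT 2 k (j - 1) := by
    rw [eulerianT.succ 2 hk]; push_cast; ring
  calc ∑ j ∈ range (k + 1), eulerianT 2 (k + 1) j * (a + j).choose (2 * k + 1)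
      = ∑ j ∈ range (k + 1), (j + 1) * eulerianT 2 k j * (a + j).choose (2 * k + 1) +
          ∑ j ∈ range (k + 1),
            (2 * k + 1 - j) * eulerianT 2 k (j - 1) * (a + j).choose (2 * k + 1) := by
        rw [← sum_add_distrib]; congr! 1 with j; rw [hrec]; ring
    _ = ∑ j ∈ range k, (j + 1) * eulerianT 2 k j * (a + j).choose (2 * k + 1) +
          ∑ j ∈ range k, (2 * k - j) * eulerianT 2 k j * (a + j + 1).choose (2 * k + 1) := by
        rw [sum_range_succ, sum_range_succ', eulerianT.eq_zero_of_le 2 k le_rfl,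
          eulerianT.eq_zero_of_neg 2 k (by norm_num)]
        push_cast
        simp only [mul_zero, zero_mul, add_zero, add_sub_cancel_right]
        congr! 2 with j
        rw [← add_assoc]
        ring
    _ = ∑ j ∈ range k, a * (eulerianT 2 k j * (a + j).choose (2 * k)) := by
        rw [← sum_add_distrib]
        congr! 1 with j
        have := Int.add_one_mul_choose_add_sub_mul_choose_succ (a + j) (2 * k) j
        push_cast at this
        linear_combination eulerianT 2 k j * this
    _ = a * eulerianChooseSum a k := (mul_sum ..).symm

theorem eulerianChooseSum_succ_succ (n : ℕ) {k : ℕ} (hk : 1 ≤ k) :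
    eulerianChooseSum (n + 1) (k + 1) =
      n * eulerianChooseSum n k + eulerianChooseSum n (k + 1) := by
  rw [← sum_eulerianT2_succ_mul_choose hk, eulerianChooseSum, eulerianChooseSum,
    ← sum_add_distrib]
  congr! 1 with j
  rw [show n + 1 + j = n + j + 1 by ring, show 2 * (k + 1) = 2 * k + 1 + 1 by ring,
    Nat.choose_succ_succ']
  push_cast
  ring

theorem stirlingFirst_sub_eq_eulerianChooseSum :
    ∀ (n : ℕ) {k : ℕ}, 1 ≤ k → (stirlingFirst n (n - k) : ℤ) = eulerianChooseSum n k
  -- `k = 1` is a base case: the identity fails at `k = 0`, where `eulerianT 2 0 = 0`.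
  | n, 1, _ => by
      simp [eulerianChooseSum, stirlingFirst_self_sub_one, eulerianT]
  | 0, k + 2, _ => by
      rw [stirlingFirst, if_neg (by omega), eulerianChooseSum, sum_eq_zero]
      · rfl
      · intro j hj
        rw [Nat.choose_eq_zero_of_lt (by simp at hj; omega)]
        simp
  | n + 1, k + 2, _ => by
      rw [stirlingFirst, eulerianChooseSum_succ_succ n (by omega : 1 ≤ k + 1),
        ← stirlingFirst_sub_eq_eulerianChooseSum n (by omega : 1 ≤ k + 1),
        ← stirlingFirst_sub_eq_eulerianChooseSum n (by omega : 1 ≤ k + 2)]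
      push_cast
      rw [show (n : ℤ) + 1 - (k + 2) = n - (k + 1) by ring,
        show (n : ℤ) - (k + 1) - 1 = n - (k + 2) by ring]

theorem eulerianChooseSum_eq_sum_Icc (n k : ℕ) :
    eulerianChooseSum n k =
      ∑ i ∈ Icc (k + 1) n,
        eulerianT 2 k (2 * (k : ℤ) - i) * ((2 * k + n - i).choose (2 * k) : ℤ) := by
  rw [eulerianChooseSum]
  refine sum_bij_ne_zero (fun j _ _ => 2 * k - j) ?_ ?_ ?_ ?_
  · intro j hj hne
    have : 2 * k ≤ n + j := by
      by_contra! h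
      simp [Nat.choose_eq_zero_of_lt h] at hne
    simp only [mem_range, mem_Icc] at hj ⊢
    omega
  · intro j₁ hj₁ _ j₂ hj₂ _ h
    simp only [mem_range] at hj₁ hj₂
    omega
  · intro i hi hne
    have : i ≤ 2 * k := by
      by_contra! h
      rw [eulerianT.eq_zero_of_neg 2 k (by omega), zero_mul] at hne
      exact hne rfl
    simp only [mem_Icc] at hi
    refine ⟨2 * k - i, by simp only [mem_range]; omega, ?_, by omega⟩
    rwa [Nat.cast_sub this, show n + (2 * k - i) = 2 * k + n - i by omega, Nat.cast_mul,
      Nat.cast_ofNat]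
  · intro j hj _
    simp only [mem_range] at hj
    rw [show 2 * k + n - (2 * k - j) = n + j by omega, Nat.cast_sub (by omega), Nat.cast_mul,
      Nat.cast_ofNat, sub_sub_cancel]

theorem stirlingFirst_eq_sum_eulerianT2 (n k : ℕ) (hk : 1 ≤ k) :
    (stirlingFirst n ((n : ℤ) - k) : ℤ) =
      ∑ i ∈ Finset.Icc (k + 1) n,
        eulerianT 2 k (2 * (k : ℤ) - i) * ((2 * k + n - i).choose (2 * k) : ℤ) := by
  rw [stirlingFirst_sub_eq_eulerianChooseSum n hk, eulerianChooseSum_eq_sum_Icc]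
end

section
/- For m ≥ 1 and n ≥ 1, the last entry of the n-th row of the m-th order Eulerian triangle equals T^(m)_{n,n-1} = ∏_{j=1}^{n-1} (j(m-1)+1) = m·(2(m-1)+1)···((n-1)(m-1)+1), with T^(m)_{1,0} = 1. -/
lemma eulerianT_zero_of_ge (m n : ℕ) (k : ℤ) (h : (n : ℤ) ≤ k) :
    eulerianT m n k = 0 := by
  match n with
  | 0 => rfl
  | 1 =>
    simp only [eulerianT]
    have : k ≠ 0 := by omega
    simp [this]
  | n + 2 =>
    simp only [eulerianT]
    push_cast at h
    have : k < 0 ∨ (n : ℤ) + 2 ≤ k := Or.inr (by omega)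
    simp [this]

theorem eulerianT_last (m n : ℕ) (hm : 1 ≤ m) (hn : 1 ≤ n) :
    eulerianT m n ((n : ℤ) - 1) =
      ∏ j ∈ Finset.Icc 1 (n - 1), ((j : ℤ) * ((m : ℤ) - 1) + 1) := by
  induction n with
  | zero => omega
  | succ n ih =>
    match n with
    | 0 => simp [eulerianT]
    | n + 1 =>
      have ih' := ih (by omega)
      simp only [eulerianT]
      push_cast at ih' ⊢
      have hc : ¬ (((n : ℤ) + 1 + 1 - 1 : ℤ) < 0 ∨ (n : ℤ) + 2 ≤ (n : ℤ) + 1 + 1 - 1) := by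
        push_cast; omega
      rw [if_neg hc]
      have h0 : eulerianT m (n + 1) ((n : ℤ) + 1 + 1 - 1) = 0 :=
        eulerianT_zero_of_ge m (n + 1) _ (by push_cast; omega)
      have h1 : ((n : ℤ) + 1 + 1 - 1 - 1) = ((n : ℤ) + 1 - 1) := by ring
      rw [h0, h1, ih']
      rw [Finset.prod_Icc_succ_top (by omega : 1 ≤ n + 1)]
      push_cast
      ring
end
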